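/- For β > -1/2 define the discrete kernel K_β(n) := 0 if |n| - β - 1 ∈ ℕ₀, and K_β(n) := (-1)^{|n|}·Γ(2β+1)/(Γ(1+β+|n|)·Γ(1+β-|n|)) otherwise. Then for β ≥ 0 and j ∈ ℤ, K_β(j) = (2/π)·4^β·(-1)^j·∫_0^{π/2} cos(2jθ)·cos^{2β}θ dθ; in particular K_β(j) are the Fourier coefficients of θ ↦ (4sin²(θ/2))^β on the torus, and Σ_{j∈ℤ} K_β(j) = 0 for β > 0. -/

import Mathlib

open scoped Classical

/-- The kernel of the fractional power `(-Δ_d)^β` of the discrete Laplacian: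
`K_β(n) = 0` if `|n| - β - 1 ∈ ℕ₀`, and
`K_β(n) = (-1)^{|n|} Γ(2β+1) / (Γ(1+β+|n|) Γ(1+β-|n|))` otherwise. -/
noncomputable def fracKernel (β : ℝ) (n : ℤ) : ℝ :=
  if ∃ m : ℕ, (n.natAbs : ℝ) - β - 1 = m then 0
  else (-1 : ℝ) ^ n.natAbs * Real.Gamma (2 * β + 1) /
    (Real.Gamma (1 + β + n.natAbs) * Real.Gamma (1 + β - n.natAbs))


/-!
With `I(ν) = ∫₀^{π/2} cos (2νθ) cos^{2β} θ dθ`, the substitution `x = sin² θ` turns `I(0)` into a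
Beta integral, which Legendre's duplication formula evaluates, and integrating
`sin ((2ν+1)θ) cos^{2β+1} θ` by parts gives `(ν + β + 1) I(ν + 1) = (β - ν) I(ν)`, the recursion
satisfied by `Γ(2β+1) / (Γ(1+β+n) Γ(1+β-n))`. The integral over the torus folds onto `[0, π/2]`
by evenness and the substitution `θ ↦ π - 2θ`.

For the sum, `K_β(n) = T(n) - T(n+1)` with `T(n) = (-1)^n Γ(2β) / (Γ(β+n) Γ(1+β-n))`. For `n > β`,
`|T(n+1)| = (1 - 2β/(n+β)) |T(n)|`: the series is absolutely convergent and, since `∑ 1/n`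
diverges, `T(n) → 0`. So `∑_{n ≥ 0} K_β(n) = T(0)`, and `T(1) = -T(0)` makes the two halves of
the sum over `ℤ` cancel.
-/

open Real MeasureTheory intervalIntegral Set Filter Topology

lemma fracKernel_natAbs (β : ℝ) (j : ℤ) : fracKernel β j.natAbs = fracKernel β j := by
  simp only [fracKernel, Int.natAbs_natCast]

-- `Real.Gamma` vanishes at its poles, so the first branch of `fracKernel` is a case of the second.
lemma fracKernel_natCast (β : ℝ) (n : ℕ) :
    fracKernel β n = (-1) ^ n * Gamma (2 * β + 1) / (Gamma (1 + β + n) * Gamma (1 + β - n)) := by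
  rw [fracKernel, Int.natAbs_natCast, ite_eq_right_iff]
  rintro ⟨m, hm⟩
  rw [show 1 + β - n = -m by linarith, Gamma_neg_nat_eq_zero, mul_zero, div_zero]

lemma strictMonoOn_sin_sq : StrictMonoOn (fun θ : ℝ => sin θ ^ 2) (Icc 0 (π / 2)) :=
  fun a ha b hb hab => pow_lt_pow_left₀
    (strictMonoOn_sin ⟨by linarith [ha.1, pi_pos], ha.2⟩ ⟨by linarith [hb.1, pi_pos], hb.2⟩ hab)
    (sin_nonneg_of_nonneg_of_le_pi ha.1 (by linarith [ha.2, pi_pos])) two_ne_zero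

lemma sin_sq_image_Ioo : (fun θ : ℝ => sin θ ^ 2) '' Ioo 0 (π / 2) = Ioo 0 1 := by
  rw [(by fun_prop : Continuous fun θ : ℝ => sin θ ^ 2).continuousOn.image_Ioo_of_strictMonoOn
    (by positivity) strictMonoOn_sin_sq]
  simp

lemma integral_rpow_neg_half_mul_one_sub_rpow (β : ℝ) :
    ∫ x in (0 : ℝ)..1, x ^ (-(1 / 2) : ℝ) * (1 - x) ^ (β - 1 / 2) =
      2 * ∫ θ in (0 : ℝ)..(π / 2), cos θ ^ (2 * β) := by
  have hsubst := integral_image_eq_integral_abs_deriv_smul (f := fun θ => sin θ ^ 2)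
    (f' := fun θ => 2 * sin θ * cos θ) measurableSet_Ioo
    (fun θ _ => by simpa [mul_assoc] using ((hasDerivAt_sin θ).fun_pow 2).hasDerivWithinAt)
    (strictMonoOn_sin_sq.injOn.mono Ioo_subset_Icc_self)
    (fun x => x ^ (-(1 / 2) : ℝ) * (1 - x) ^ (β - 1 / 2))
  rw [sin_sq_image_Ioo] at hsubst
  rw [integral_of_le zero_le_one, integral_of_le (by positivity), integral_Ioc_eq_integral_Ioo,
    integral_Ioc_eq_integral_Ioo, hsubst, ← MeasureTheory.integral_const_mul]
  refine setIntegral_congr_fun measurableSet_Ioo fun θ hθ => ?_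
  have hs : 0 < sin θ := sin_pos_of_pos_of_lt_pi hθ.1 (by linarith [hθ.2, pi_pos])
  have hc : 0 < cos θ := cos_pos_of_mem_Ioo ⟨by linarith [hθ.1, pi_pos], hθ.2⟩
  have hsin : (sin θ ^ 2) ^ (-(1 / 2) : ℝ) = (sin θ)⁻¹ := by
    rw [← rpow_natCast, ← rpow_mul hs.le]; norm_num [rpow_neg_one]
  have hcos : (1 - sin θ ^ 2) ^ (β - 1 / 2) * cos θ = cos θ ^ (2 * β) := by
    rw [← cos_sq', ← rpow_natCast, ← rpow_mul hc.le, ← rpow_add_one hc.ne']; ring_nf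
  simp only [smul_eq_mul, hsin, abs_of_pos (by positivity : 0 < 2 * sin θ * cos θ)]
  rw [← hcos]
  field_simp

lemma integral_rpow_neg_half_mul_one_sub_rpow_eq_Gamma {β : ℝ} (hβ : -(1 / 2) < β) :
    ∫ x in (0 : ℝ)..1, x ^ (-(1 / 2) : ℝ) * (1 - x) ^ (β - 1 / 2) =
      √π * Gamma (β + 1 / 2) / Gamma (β + 1) := by
  have hbeta : Complex.betaIntegral (1 / 2) (β + 1 / 2 : ℝ) =
      ((∫ x in (0 : ℝ)..1, x ^ (-(1 / 2) : ℝ) * (1 - x) ^ (β - 1 / 2) : ℝ) : ℂ) := by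
    rw [Complex.betaIntegral, ← intervalIntegral.integral_ofReal]
    refine integral_congr fun x hx => ?_
    rw [uIcc_of_le zero_le_one] at hx
    simp only [Complex.ofReal_mul, Complex.ofReal_cpow hx.1,
      Complex.ofReal_cpow (sub_nonneg.2 hx.2 : (0 : ℝ) ≤ 1 - x)]
    push_cast
    ring_nf
  have h := Complex.Gamma_mul_Gamma_eq_betaIntegral (s := 1 / 2) (t := (β + 1 / 2 : ℝ))
    (by norm_num) (by simp; linarith)
  rw [hbeta, show (1 / 2 : ℂ) = ((1 / 2 : ℝ) : ℂ) by push_cast; rfl, Complex.Gamma_ofReal,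
    Complex.Gamma_ofReal, ← Complex.ofReal_add, Complex.Gamma_ofReal, ← Complex.ofReal_mul,
    ← Complex.ofReal_mul, Complex.ofReal_inj, Gamma_one_half_eq,
    show 1 / 2 + (β + 1 / 2) = β + 1 by ring] at h
  rw [eq_div_iff (Gamma_pos_of_pos (by linarith)).ne', h]
  ring

lemma integral_cos_rpow {β : ℝ} (hβ : -(1 / 2) < β) :
    ∫ θ in (0 : ℝ)..(π / 2), cos θ ^ (2 * β) =
      π / (2 * 4 ^ β) * (Gamma (2 * β + 1) / (Gamma (1 + β) * Gamma (1 + β))) := by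
  have hI := integral_rpow_neg_half_mul_one_sub_rpow β
  rw [integral_rpow_neg_half_mul_one_sub_rpow_eq_Gamma hβ] at hI
  have hdup := Gamma_mul_Gamma_add_half (β + 1 / 2)
  have h4 : (2 : ℝ) ^ (1 - (2 * β + 1)) = (4 ^ β)⁻¹ := by
    rw [show 1 - (2 * β + 1) = -(2 * β) by ring, rpow_neg zero_le_two, rpow_mul zero_le_two]
    norm_num
  rw [show β + 1 / 2 + 1 / 2 = β + 1 by ring, show 2 * (β + 1 / 2) = 2 * β + 1 by ring, h4] at hdup
  have hG : 0 < Gamma (β + 1) := Gamma_pos_of_pos (by linarith)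
  set I := ∫ θ in (0 : ℝ)..(π / 2), cos θ ^ (2 * β)
  rw [add_comm 1 β]
  calc I = √π * (Gamma (β + 1 / 2) * Gamma (β + 1)) / (2 * Gamma (β + 1) * Gamma (β + 1)) := by
        rw [eq_div_iff (by positivity), show I * (2 * Gamma (β + 1) * Gamma (β + 1)) =
          2 * I * Gamma (β + 1) * Gamma (β + 1) by ring, ← hI]
        field_simp
    _ = π / (2 * 4 ^ β) * (Gamma (2 * β + 1) / (Gamma (β + 1) * Gamma (β + 1))) := by
        rw [hdup]; field_simp; rw [sq_sqrt pi_pos.le]; ring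

noncomputable def cosMoment (β ν : ℝ) : ℝ :=
  ∫ θ in (0 : ℝ)..(π / 2), cos (2 * ν * θ) * cos θ ^ (2 * β)

lemma cosMoment_abs (β ν : ℝ) : cosMoment β |ν| = cosMoment β ν := by
  rcases abs_choice ν with h | h <;> rw [h]
  simp only [cosMoment, neg_mul, mul_neg, neg_mul, cos_neg]

lemma hasDerivAt_sin_mul_cos_rpow {β : ℝ} (hβ : 0 ≤ β) (ν θ : ℝ) :
    HasDerivAt (fun θ => sin ((2 * ν + 1) * θ) * cos θ ^ (2 * β + 1))
      ((ν + β + 1) * (cos (2 * (ν + 1) * θ) * cos θ ^ (2 * β)) +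
        (ν - β) * (cos (2 * ν * θ) * cos θ ^ (2 * β))) θ := by
  have hsin := (hasDerivAt_sin ((2 * ν + 1) * θ)).comp θ ((hasDerivAt_id θ).const_mul (2 * ν + 1))
  have hcos := (hasDerivAt_rpow_const (x := cos θ) (p := 2 * β + 1) (Or.inr (by linarith))).comp θ
    (hasDerivAt_cos θ)
  refine (hsin.mul hcos).congr_deriv ?_
  have hpow : cos θ ^ (2 * β + 1) = cos θ ^ (2 * β) * cos θ := by
    rcases eq_or_ne (cos θ) 0 with h0 | h0
    · simp [h0, zero_rpow (by linarith : 2 * β + 1 ≠ 0)]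
    · exact rpow_add_one h0 _
  rw [add_sub_cancel_right, Function.comp_apply, Function.comp_apply, hpow,
    show 2 * (ν + 1) * θ = (2 * ν + 1) * θ + θ by ring,
    show 2 * ν * θ = (2 * ν + 1) * θ - θ by ring, cos_add, cos_sub]
  ring

lemma cosMoment_add_one {β : ℝ} (hβ : 0 ≤ β) (ν : ℝ) :
    (ν + β + 1) * cosMoment β (ν + 1) = (β - ν) * cosMoment β ν := by
  have hcont : ∀ c : ℝ, Continuous fun θ => cos (c * θ) * cos θ ^ (2 * β) := fun c =>
    (continuous_cos.comp (continuous_const.mul continuous_id)).mul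
      ((continuous_rpow_const (by linarith)).comp continuous_cos)
  have hFTC := integral_eq_sub_of_hasDerivAt (a := 0) (b := π / 2)
    (fun θ _ => hasDerivAt_sin_mul_cos_rpow hβ ν θ)
    ((((hcont _).const_mul _).add ((hcont _).const_mul _)).intervalIntegrable _ _)
  rw [integral_add (((hcont _).const_mul _).intervalIntegrable _ _)
    (((hcont _).const_mul _).intervalIntegrable _ _), intervalIntegral.integral_const_mul,
    intervalIntegral.integral_const_mul,
    cos_pi_div_two, zero_rpow (by linarith), mul_zero, mul_zero, sin_zero, zero_mul,
    sub_zero] at hFTC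
  simp only [cosMoment]
  linarith

lemma cosMoment_natCast {β : ℝ} (hβ : 0 ≤ β) (n : ℕ) :
    cosMoment β n =
      π / (2 * 4 ^ β) * (Gamma (2 * β + 1) / (Gamma (1 + β + n) * Gamma (1 + β - n))) := by
  induction n with
  | zero => simpa [cosMoment] using integral_cos_rpow (by linarith : -(1 / 2) < β)
  | succ n ih =>
    have hrec := cosMoment_add_one hβ n
    have hpos : 0 < (n : ℝ) + β + 1 := by positivity
    have hΓ : Gamma (1 + β + (n + 1)) = (n + β + 1) * Gamma (1 + β + n) := by
      rw [show 1 + β + (n + 1) = (1 + β + n) + 1 by ring, Gamma_add_one (by positivity)]; ring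
    push_cast
    rw [show cosMoment β (n + 1) = (β - n) * cosMoment β n / (n + β + 1) from
      eq_div_of_mul_eq hpos.ne' (by rw [mul_comm]; exact hrec), ih, hΓ,
      show 1 + β - (n + 1) = β - n by ring]
    rcases eq_or_ne (β - n) 0 with hβn | hβn
    · simp [hβn]
    · rw [show 1 + β - n = (β - n) + 1 by ring, Gamma_add_one hβn]
      rcases eq_or_ne (Gamma (β - n)) 0 with hΓ0 | hΓ0
      · simp [hΓ0]
      · have := (Gamma_pos_of_pos (by positivity : 0 < 1 + β + n)).ne'
        field_simp

lemma fracKernel_eq_cosMoment {β : ℝ} (hβ : 0 ≤ β) (j : ℤ) :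
    fracKernel β j = 2 / π * 4 ^ β * (-1) ^ j.natAbs * cosMoment β j := by
  rw [← fracKernel_natAbs, fracKernel_natCast, ← cosMoment_abs, ← Int.cast_abs, Int.abs_eq_natAbs,
    Int.cast_natCast, cosMoment_natCast hβ]
  have := pi_pos.ne'
  field_simp

lemma integral_neg_eq_two_mul_integral_of_even {f : ℝ → ℝ} (hf : Continuous f)
    (heven : ∀ x, f (-x) = f x) (a : ℝ) : ∫ x in (-a)..a, f x = 2 * ∫ x in (0 : ℝ)..a, f x := by
  rw [← integral_add_adjacent_intervals (hf.intervalIntegrable _ 0) (hf.intervalIntegrable 0 _),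
    ← neg_zero, ← integral_comp_neg, neg_zero]
  simp only [heven]
  ring

lemma four_mul_cos_sq_rpow {β : ℝ} {θ : ℝ} (hθ : 0 ≤ cos θ) :
    (4 * cos θ ^ 2) ^ β = 4 ^ β * cos θ ^ (2 * β) := by
  rw [mul_rpow (by norm_num) (by positivity), ← rpow_natCast, ← rpow_mul hθ]
  norm_num

lemma neg_one_zpow_eq_pow_natAbs {α : Type*} [DivisionRing α] (j : ℤ) :
    (-1 : α) ^ j = (-1) ^ j.natAbs := by
  obtain ⟨n, rfl | rfl⟩ := Int.eq_nat_or_neg j <;> simp [← inv_pow]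

lemma integral_cos_mul_four_sin_sq_rpow {β : ℝ} (hβ : 0 ≤ β) (j : ℤ) :
    ∫ θ in (-π)..π, cos (j * θ) * (4 * sin (θ / 2) ^ 2) ^ β =
      4 * 4 ^ β * (-1) ^ j.natAbs * cosMoment β j := by
  set g := fun θ : ℝ => cos (j * θ) * (4 * sin (θ / 2) ^ 2) ^ β
  have hg : Continuous g := by
    have := continuous_rpow_const hβ
    fun_prop
  have hreflect : ∀ θ ∈ uIcc 0 (π / 2),
      g (π - 2 * θ) = 4 ^ β * (-1) ^ j.natAbs * (cos (2 * j * θ) * cos θ ^ (2 * β)) := by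
    intro θ hθ
    rw [uIcc_of_le (by positivity)] at hθ
    simp only [g]
    rw [show (j : ℝ) * (π - 2 * θ) = j * π - 2 * j * θ by ring, cos_int_mul_pi_sub,
      show (π - 2 * θ) / 2 = π / 2 - θ by ring, sin_pi_div_two_sub,
      four_mul_cos_sq_rpow (cos_nonneg_of_mem_Icc ⟨by linarith [hθ.1, pi_pos], hθ.2⟩),
      neg_one_zpow_eq_pow_natAbs]
    ring
  calc ∫ θ in (-π)..π, g θ = 2 * ∫ θ in (0 : ℝ)..π, g θ :=
        integral_neg_eq_two_mul_integral_of_even hg (fun θ => by simp [g, neg_div]) π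
    _ = 4 * ∫ θ in (0 : ℝ)..(π / 2), g (π - 2 * θ) := by
        rw [intervalIntegral.integral_comp_sub_mul g two_ne_zero,
          show π - 2 * (π / 2) = 0 by ring, mul_zero, sub_zero, smul_eq_mul]
        ring
    _ = 4 * 4 ^ β * (-1) ^ j.natAbs * cosMoment β j := by
        rw [integral_congr hreflect, intervalIntegral.integral_const_mul, cosMoment]
        ring

lemma summable_sub_succ_of_antitone {a : ℕ → ℝ} (ha : Antitone a) (h0 : ∀ k, 0 ≤ a k) :
    Summable fun k => a k - a (k + 1) :=
  summable_of_sum_range_le (fun k => sub_nonneg.2 (ha k.le_succ)) fun N => by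
    rw [Finset.sum_range_sub']
    linarith [h0 N]

lemma tendsto_zero_of_le_one_sub_mul {a c : ℕ → ℝ} (h0 : ∀ k, 0 ≤ a k) (hc : ∀ k, 0 ≤ c k)
    (hrec : ∀ k, a (k + 1) ≤ (1 - c k) * a k) (hdiv : ¬ Summable c) :
    Tendsto a atTop (𝓝 0) := by
  have hanti : Antitone a := antitone_nat_of_succ_le fun k => by nlinarith [hrec k, hc k, h0 k]
  have hbdd : BddBelow (range a) := ⟨0, by rintro _ ⟨k, rfl⟩; exact h0 k⟩
  have hm0 : 0 ≤ ⨅ k, a k := le_ciInf h0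
  suffices h : ⨅ k, a k = 0 by simpa [h] using tendsto_atTop_ciInf hanti hbdd
  by_contra hne
  have hm : 0 < ⨅ k, a k := lt_of_le_of_ne hm0 (Ne.symm hne)
  refine hdiv (((summable_sub_succ_of_antitone hanti h0).div_const (⨅ k, a k)).of_nonneg_of_le
    hc fun k => ?_)
  rw [le_div_iff₀ hm]
  nlinarith [ciInf_le hbdd k, hrec k, hc k]

lemma hasSum_sub_succ {g : ℕ → ℝ} {l : ℝ} (hs : Summable fun n => g n - g (n + 1))
    (hg : Tendsto g atTop (𝓝 l)) : HasSum (fun n => g n - g (n + 1)) (g 0 - l) := by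
  rw [hs.hasSum_iff_tendsto_nat]
  simpa only [Finset.sum_range_sub'] using hg.const_sub (g 0)

noncomputable def fracKernelTail (β : ℝ) (n : ℕ) : ℝ :=
  (-1) ^ n * Gamma (2 * β) / (Gamma (β + n) * Gamma (1 + β - n))

lemma lt_natCast_add_floor_add_one (β : ℝ) (k : ℕ) : β < (k + (⌊β⌋₊ + 1) : ℕ) :=
  (Nat.lt_floor_add_one β).trans_le (by push_cast; linarith [k.cast_nonneg (α := ℝ)])

section Tail

variable {β : ℝ}

lemma fracKernel_natCast_eq_sub (hβ : 0 < β) (n : ℕ) :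
    fracKernel β n = fracKernelTail β n - fracKernelTail β (n + 1) := by
  have hβn : 0 < β + n := by positivity
  have hΓ2 : Gamma (2 * β + 1) = 2 * β * Gamma (2 * β) := Gamma_add_one (by positivity)
  have hΓ1 : Gamma (1 + β + n) = (β + n) * Gamma (β + n) := by
    rw [show 1 + β + n = β + n + 1 by ring, Gamma_add_one hβn.ne']
  have hΓn := (Gamma_pos_of_pos hβn).ne'
  rw [fracKernel_natCast, fracKernelTail, fracKernelTail, hΓ2, hΓ1]
  push_cast
  rw [show β + (n + 1) = β + n + 1 by ring, Gamma_add_one hβn.ne',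
    show 1 + β - (n + 1) = β - n by ring, pow_succ]
  rcases eq_or_ne (β - n) 0 with h | h
  · rw [show 1 + β - n = 1 by linarith, show β + n = 2 * β by linarith, h]
    have := (Gamma_pos_of_pos (by positivity : 0 < 2 * β)).ne'
    simp only [Gamma_zero, Gamma_one, mul_zero, div_zero, sub_zero, mul_one]
    field_simp
  · rw [show 1 + β - n = β - n + 1 by ring, Gamma_add_one h]
    rcases eq_or_ne (Gamma (β - n)) 0 with hΓ | hΓ
    · simp [hΓ]
    · field_simp
      ring

lemma fracKernelTail_succ (hβ : 0 < β) {n : ℕ} (hn : (n : ℝ) ≠ β) :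
    fracKernelTail β (n + 1) = (1 - 2 * β / (n + β)) * fracKernelTail β n := by
  have hβn : 0 < β + n := by positivity
  have hΓn := (Gamma_pos_of_pos hβn).ne'
  have h : β - n ≠ 0 := sub_ne_zero.2 hn.symm
  rw [fracKernelTail, fracKernelTail]
  push_cast
  rw [show β + (n + 1) = β + n + 1 by ring, Gamma_add_one hβn.ne',
    show 1 + β - (n + 1) = β - n by ring, show 1 + β - n = β - n + 1 by ring, Gamma_add_one h,
    pow_succ]
  rcases eq_or_ne (Gamma (β - n)) 0 with hΓ | hΓ
  · simp [hΓ]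
  · field_simp
    ring

lemma abs_fracKernelTail_succ (hβ : 0 < β) {n : ℕ} (hn : β < n) :
    |fracKernelTail β (n + 1)| = (1 - 2 * β / (n + β)) * |fracKernelTail β n| := by
  rw [fracKernelTail_succ hβ hn.ne', abs_mul, abs_of_nonneg]
  rw [sub_nonneg, div_le_one (by positivity)]
  linarith

lemma abs_fracKernel_natCast (hβ : 0 < β) {n : ℕ} (hn : β < n) :
    |fracKernel β n| = |fracKernelTail β n| - |fracKernelTail β (n + 1)| := by
  rw [fracKernel_natCast_eq_sub hβ, abs_fracKernelTail_succ hβ hn, fracKernelTail_succ hβ hn.ne',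
    ← one_sub_mul, sub_sub_cancel, abs_mul, abs_of_pos (by positivity : 0 < 2 * β / (n + β))]
  ring

lemma antitone_abs_fracKernelTail (hβ : 0 < β) {N : ℕ} (hN : β < N) :
    Antitone fun k => |fracKernelTail β (k + N)| :=
  antitone_nat_of_succ_le fun k => by
    have hk : β < (k + N : ℕ) := by push_cast; linarith [k.cast_nonneg (α := ℝ)]
    rw [Nat.add_right_comm, abs_fracKernelTail_succ hβ hk]
    refine mul_le_of_le_one_left (abs_nonneg _) (sub_le_self _ ?_)
    positivity

lemma tendsto_fracKernelTail (hβ : 0 < β) : Tendsto (fracKernelTail β) atTop (𝓝 0) := by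
  set N := ⌊β⌋₊ + 1
  have hN : ∀ k : ℕ, β < (k + N : ℕ) := lt_natCast_add_floor_add_one β
  have hdiv : ¬ Summable fun k : ℕ => 2 * β / ((k + N : ℕ) + β) := fun h => by
    have := (Real.summable_one_div_nat_add_rpow (N + β) 1).1
      ((h.mul_left (2 * β)⁻¹).congr fun k => by
        rw [rpow_one, abs_of_pos (by positivity)]; push_cast; field_simp; ring)
    norm_num at this
  rw [← tendsto_add_atTop_iff_nat N, tendsto_zero_iff_abs_tendsto_zero]
  exact tendsto_zero_of_le_one_sub_mul (a := fun k => |fracKernelTail β (k + N)|)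
    (fun k => abs_nonneg _) (fun k => by positivity)
    (fun k => by rw [Nat.add_right_comm, abs_fracKernelTail_succ hβ (hN k)]) hdiv

lemma summable_fracKernel_natCast (hβ : 0 < β) : Summable fun n : ℕ => fracKernel β n := by
  set N := ⌊β⌋₊ + 1
  have hN : ∀ k : ℕ, β < (k + N : ℕ) := lt_natCast_add_floor_add_one β
  rw [← summable_nat_add_iff N]
  refine Summable.of_abs ((summable_sub_succ_of_antitone
    (antitone_abs_fracKernelTail hβ (by simpa using hN 0)) fun k => abs_nonneg _).congr fun k => ?_)
  rw [abs_fracKernel_natCast hβ (hN k), Nat.add_right_comm]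

lemma hasSum_fracKernel (hβ : 0 < β) : HasSum (fracKernel β) 0 := by
  have hsum : Summable fun n => fracKernelTail β n - fracKernelTail β (n + 1) :=
    (summable_fracKernel_natCast hβ).congr fun n => fracKernel_natCast_eq_sub hβ n
  have hlim := tendsto_fracKernelTail hβ
  have hnat := hasSum_sub_succ hsum hlim
  have hneg := hasSum_sub_succ ((summable_nat_add_iff 1).2 hsum)
    ((tendsto_add_atTop_iff_nat 1).2 hlim)
  have hT1 : fracKernelTail β 1 = -fracKernelTail β 0 := by
    rw [fracKernelTail_succ hβ (by simpa using hβ.ne)]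
    field_simp
    ring
  convert HasSum.of_nat_of_neg_add_one (f := fracKernel β) (hnat.congr_fun fun n => ?_)
    (hneg.congr_fun fun n => ?_) using 1
  · rw [zero_add, hT1]; ring
  · exact fracKernel_natCast_eq_sub hβ n
  · rw [← fracKernel_natAbs, show (-((n : ℤ) + 1)).natAbs = n + 1 by omega,
      fracKernel_natCast_eq_sub hβ]

end Tail

open Real in
theorem fracKernel_fourier (β : ℝ) (hβ : 0 ≤ β) :
    (∀ j : ℤ, fracKernel β j = (2 / π) * (4 : ℝ) ^ β * (-1 : ℝ) ^ j.natAbs *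
        ∫ θ in (0 : ℝ)..(π / 2), Real.cos (2 * (j : ℝ) * θ) * Real.cos θ ^ (2 * β)) ∧
    (∀ j : ℤ, fracKernel β j = (1 / (2 * π)) *
        ∫ θ in (-π)..π, Real.cos ((j : ℝ) * θ) * (4 * Real.sin (θ / 2) ^ 2) ^ β) ∧
    (0 < β → Summable (fun j : ℤ => fracKernel β j) ∧ ∑' j : ℤ, fracKernel β j = 0) := by
  refine ⟨fracKernel_eq_cosMoment hβ, fun j => ?_, fun hβ' =>
    ⟨(hasSum_fracKernel hβ').summable, (hasSum_fracKernel hβ').tsum_eq⟩⟩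
  rw [integral_cos_mul_four_sin_sq_rpow hβ, fracKernel_eq_cosMoment hβ]
  field_simp [pi_ne_zero]
  ring
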